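/- Let f = x1³ + x2²x3 ∈ ℂ[x1,x2,x3] (the cuspidal cubic cone). Then the ED data singular locus DS(f) equals the hypersurface V(x1·(4x1³ − 27x2²x3)) = {u ∈ ℂ³ : u1·(4u1³ − 27u2²u3) = 0}; in particular the dual variety V(4x1³ − 27x2²x3) is an irreducible component of DS(f). -/

import Mathlib

open MvPolynomial Pointwise

/-- Gradient of a multivariate polynomial at a point. -/
noncomputable def grad {n : ℕ} (f : MvPolynomial (Fin n) ℂ) (x : Fin n → ℂ) : Fin n → ℂ :=
  fun i => eval x (pderiv i f)

/-- Zariski closure: zero locus of the ideal of all polynomials vanishing on `S`. -/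
def zclosure {σ : Type} (S : Set (σ → ℂ)) : Set (σ → ℂ) :=
  {x | ∀ p : MvPolynomial σ ℂ, (∀ s ∈ S, eval s p = 0) → eval x p = 0}

/-- Zero locus `V(f)`. -/
def Vp {n : ℕ} (f : MvPolynomial (Fin n) ℂ) : Set (Fin n → ℂ) := {x | eval x f = 0}

/-- Regular locus. -/
def RegL {n : ℕ} (f : MvPolynomial (Fin n) ℂ) : Set (Fin n → ℂ) :=
  {x | eval x f = 0 ∧ grad f x ≠ 0}

/-- Singular locus. -/
def SingL {n : ℕ} (f : MvPolynomial (Fin n) ℂ) : Set (Fin n → ℂ) :=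
  {x | eval x f = 0 ∧ grad f x = 0}

/-- ED correspondence: Zariski closure of pairs (u,x), x regular, u - x ∈ ℂ·∇f(x),
encoded as functions on `Fin n ⊕ Fin n`. -/
def EDcorr {n : ℕ} (f : MvPolynomial (Fin n) ℂ) : Set ((Fin n ⊕ Fin n) → ℂ) :=
  zclosure {w | ∃ u x : Fin n → ℂ, w = Sum.elim u x ∧ x ∈ RegL f ∧ ∃ t : ℂ, u - x = t • grad f x}

/-- ED data singular locus. -/
def DS {n : ℕ} (f : MvPolynomial (Fin n) ℂ) : Set (Fin n → ℂ) :=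
  {u | ∃ x, Sum.elim u x ∈ EDcorr f ∧ x ∈ SingL f}

/-- Dual variety. -/
def dualV {n : ℕ} (f : MvPolynomial (Fin n) ℂ) : Set (Fin n → ℂ) :=
  zclosure {y | ∃ (t : ℂ) (x : Fin n → ℂ), x ∈ RegL f ∧ y = t • grad f x}

/-- Isotropic quadric. -/
def isoQ (n : ℕ) : Set (Fin n → ℂ) := {x | ∑ i, (x i) ^ 2 = 0}

/-- ED data isotropic locus. -/
def DI {n : ℕ} (f : MvPolynomial (Fin n) ℂ) : Set (Fin n → ℂ) :=
  {u | ∃ x, Sum.elim u x ∈ EDcorr f ∧ x ∈ isoQ n ∩ Vp f}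

/-- Zariski-closed sets. -/
def IsZClosed {σ : Type} (S : Set (σ → ℂ)) : Prop := zclosure S = S

/-- Irreducibility with respect to Zariski-closed sets. -/
def IsZIrreducible {σ : Type} (S : Set (σ → ℂ)) : Prop :=
  S.Nonempty ∧ ∀ C₁ C₂ : Set (σ → ℂ), IsZClosed C₁ → IsZClosed C₂ →
    S ⊆ C₁ ∪ C₂ → S ⊆ C₁ ∨ S ⊆ C₂

/-- `C` is an irreducible component of `S`. -/
def IsIrredComponentOf {σ : Type} (C S : Set (σ → ℂ)) : Prop :=
  C ⊆ S ∧ IsZClosed C ∧ IsZIrreducible C ∧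
    ∀ C' : Set (σ → ℂ), IsZClosed C' → IsZIrreducible C' → C ⊆ C' → C' ⊆ S → C' = C



/-!
The singular locus of the cone is the line `x₀ = x₁ = 0`. On the pairs `(u, x)` with `x` regular
and `u - x ∈ ℂ ∇f(x)`, hence on their Zariski closure, two polynomial relations hold:
`x₁(u₁ - x₁) = 2x₂(u₂ - x₂)` and `4(u₀ - x₀)³ = 27(u₁ - x₁)²(u₂ - x₂)`. Over a singular point
`(0, 0, c)` they force either `c = 0` and `u` on the dual hypersurface, or `u₂ = c` and `u₀ = 0`.

Conversely, the regular points `c(-σ², σ³, 1)` (`cσ ≠ 0`) have normal direction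
`(3σ/2, 1, σ³/2)`. Letting `c` or `σ` go to `0` reaches every `u` with `u₀ = 0` (over `(0, 0, u₂)`)
and every point of the dual hypersurface with `u₁ ≠ 0` (over the vertex). The dual hypersurface is
the image of `(λ, b, c) ↦ λ(3b²c, 2b³, c³)`, hence irreducible, and it is not contained in the plane
`u₀ = 0`.
-/

open Filter Topology

theorem eventually_add_ne_zero {G : Type*} [AddGroup G] [TopologicalSpace G] [T1Space G] (a : G) :
    ∀ᶠ s in 𝓝[≠] (0 : G), a + s ≠ 0 := by
  rcases eq_or_ne a 0 with rfl | ha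
  · filter_upwards [self_mem_nhdsWithin] with s hs
    simpa using hs
  · filter_upwards [eventually_ne_nhdsWithin (neg_ne_zero.mpr ha).symm] with s hs has
    exact hs (neg_eq_of_add_eq_zero_right has).symm

section Zariski

variable {σ : Type}

theorem subset_zclosure (S : Set (σ → ℂ)) : S ⊆ zclosure S :=
  fun _ hx _ hp => hp _ hx

theorem isClosed_zclosure (S : Set (σ → ℂ)) : IsClosed (zclosure S) := by
  simp only [zclosure, Set.ofPred_forall]
  exact isClosed_iInter fun p => isClosed_iInter fun _ =>
    isClosed_eq (continuous_eval p) continuous_const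

theorem isZClosed_setOf_eval_eq_zero (p : MvPolynomial σ ℂ) : IsZClosed {x | eval x p = 0} :=
  Set.Subset.antisymm (fun _ hx => hx p fun _ hs => hs) (subset_zclosure _)

theorem IsZClosed.exists_eval_ne_zero {C : Set (σ → ℂ)} (hC : IsZClosed C) {y : σ → ℂ}
    (hy : y ∉ C) : ∃ p : MvPolynomial σ ℂ, (∀ x ∈ C, eval x p = 0) ∧ eval y p ≠ 0 := by
  rw [← hC] at hy
  simpa [zclosure] using hy

/-- The pullbacks of two polynomials separating points from `C₁` and `C₂` multiply to a polynomial
vanishing on all of `ℂ^τ`, so one of them is zero. -/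
theorem isZIrreducible_range_eval {τ : Type} (g : σ → MvPolynomial τ ℂ) :
    IsZIrreducible (Set.range fun v i => eval v (g i)) := by
  have eval_bind : ∀ p z, eval z (bind₁ g p) = eval (fun i => eval z (g i)) p :=
    fun _ _ => eval₂Hom_bind₁ _ _ _ _
  refine ⟨Set.range_nonempty _, fun C₁ C₂ hC₁ hC₂ hsub => ?_⟩
  by_contra! h
  obtain ⟨⟨_, ⟨v, rfl⟩, hv⟩, ⟨_, ⟨w, rfl⟩, hw⟩⟩ := And.imp Set.not_subset.mp Set.not_subset.mp h
  obtain ⟨p₁, hp₁, hv₁⟩ := hC₁.exists_eval_ne_zero hv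
  obtain ⟨p₂, hp₂, hw₂⟩ := hC₂.exists_eval_ne_zero hw
  have hprod : bind₁ g p₁ * bind₁ g p₂ = 0 := MvPolynomial.funext fun z => by
    rcases hsub ⟨z, rfl⟩ with h | h
    · simp [eval_bind, hp₁ _ h]
    · simp [eval_bind, hp₂ _ h]
  rcases mul_eq_zero.mp hprod with h | h
  · exact hv₁ (by rw [← eval_bind, h, map_zero])
  · exact hw₂ (by rw [← eval_bind, h, map_zero])

end Zariski

section EDcorr

variable {n : ℕ} (f : MvPolynomial (Fin n) ℂ)

theorem sumElim_mem_EDcorr {x : Fin n → ℂ} (hx : x ∈ RegL f) (t : ℂ) :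
    Sum.elim (x + t • grad f x) x ∈ EDcorr f :=
  subset_zclosure _ ⟨_, x, rfl, hx, t, add_sub_cancel_left _ _⟩

theorem eval_eq_zero_of_mem_EDcorr {p : MvPolynomial (Fin n ⊕ Fin n) ℂ}
    (hp : ∀ x ∈ RegL f, ∀ t : ℂ, eval (Sum.elim (x + t • grad f x) x) p = 0)
    {w : Fin n ⊕ Fin n → ℂ} (hw : w ∈ EDcorr f) : eval w p = 0 := by
  refine hw p ?_
  rintro _ ⟨u, x, rfl, hx, t, hut⟩
  rw [← add_sub_cancel x u, hut]
  exact hp x hx t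

end EDcorr

section CuspidalCubic

local notation "𝒞" => (X 0 ^ 3 + X 1 ^ 2 * X 2 : MvPolynomial (Fin 3) ℂ)

theorem grad_cusp (x : Fin 3 → ℂ) : grad 𝒞 x = ![3 * x 0 ^ 2, 2 * x 1 * x 2, x 1 ^ 2] := by
  ext i
  fin_cases i <;> simp [grad]; ring

theorem mem_SingL_cusp_iff {x : Fin 3 → ℂ} : x ∈ SingL 𝒞 ↔ x 0 = 0 ∧ x 1 = 0 := by
  simp only [SingL, Set.mem_ofPred_eq, grad_cusp]
  constructor
  · rintro ⟨-, hg⟩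
    have h0 := congrFun hg 0
    have h2 := congrFun hg 2
    simp_all
  · rintro ⟨h0, h1⟩
    simp [h0, h1]

/-- Both relations come from `u - x = t • (3x₀², 2x₁x₂, x₁²)`; the second says that `u - x` lies on
the dual hypersurface, which uses `f(x) = 0`. -/
theorem cusp_relations_of_mem_EDcorr {u x : Fin 3 → ℂ} (h : Sum.elim u x ∈ EDcorr 𝒞) :
    x 1 * (u 1 - x 1) = 2 * x 2 * (u 2 - x 2) ∧
      4 * (u 0 - x 0) ^ 3 = 27 * (u 1 - x 1) ^ 2 * (u 2 - x 2) := by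
  let d : Fin 3 → MvPolynomial (Fin 3 ⊕ Fin 3) ℂ := fun i => X (Sum.inl i) - X (Sum.inr i)
  constructor
  · have := eval_eq_zero_of_mem_EDcorr 𝒞 (p := X (Sum.inr 1) * d 1 - 2 * X (Sum.inr 2) * d 2)
      (fun y _ t => by simp [d, grad_cusp, Matrix.vecHead, Matrix.vecTail]; ring) h
    simpa [d, sub_eq_zero] using this
  · have := eval_eq_zero_of_mem_EDcorr 𝒞 (p := 4 * d 0 ^ 3 - 27 * d 1 ^ 2 * d 2)
      (fun y hy t => by
        have hy : y 0 ^ 3 + y 1 ^ 2 * y 2 = 0 := by simpa using hy.1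
        simp [d, grad_cusp, Matrix.vecHead, Matrix.vecTail]
        linear_combination 108 * t ^ 3 * (y 0 ^ 3 - y 1 ^ 2 * y 2) * hy) h
    simpa [d, sub_eq_zero] using this

theorem DS_cusp_subset : DS 𝒞 ⊆ {u | u 0 * (4 * u 0 ^ 3 - 27 * u 1 ^ 2 * u 2) = 0} := by
  rintro u ⟨x, hux, hx⟩
  obtain ⟨hx0, hx1⟩ := mem_SingL_cusp_iff.mp hx
  obtain ⟨h₁, h₂⟩ := cusp_relations_of_mem_EDcorr hux
  rw [hx1] at h₁
  rw [hx0, hx1] at h₂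
  rcases mul_eq_zero.mp (show x 2 * (u 2 - x 2) = 0 by linear_combination -h₁ / 2) with h | h
  · show u 0 * _ = 0
    rw [h] at h₂
    linear_combination u 0 * h₂
  · have : u 0 ^ 3 = 0 := by linear_combination h₂ / 4 + 27 / 4 * u 1 ^ 2 * h
    simp [pow_eq_zero_iff three_ne_zero |>.mp this]

def cuspConePoint (c σ : ℂ) : Fin 3 → ℂ := ![-(c * σ ^ 2), c * σ ^ 3, c]

noncomputable def cuspNormal (σ : ℂ) : Fin 3 → ℂ := ![3 * σ / 2, 1, σ ^ 3 / 2]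

theorem grad_cusp_cuspConePoint (c σ : ℂ) :
    grad 𝒞 (cuspConePoint c σ) = (2 * c ^ 2 * σ ^ 3) • cuspNormal σ := by
  ext i
  fin_cases i <;> simp [grad_cusp, cuspConePoint, cuspNormal] <;> ring

theorem cuspConePoint_mem_RegL {c σ : ℂ} (hc : c ≠ 0) (hσ : σ ≠ 0) :
    cuspConePoint c σ ∈ RegL 𝒞 := by
  refine ⟨by simp [cuspConePoint]; ring, fun h => ?_⟩
  have := congrFun h 1
  simp [grad_cusp_cuspConePoint, cuspNormal] at this
  simp_all

theorem sumElim_cuspConePoint_mem_EDcorr (c σ v : ℂ) :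
    Sum.elim (cuspConePoint c σ + v • cuspNormal σ) (cuspConePoint c σ) ∈ EDcorr 𝒞 := by
  let γ : ℂ → Fin 3 ⊕ Fin 3 → ℂ := fun s =>
    Sum.elim (cuspConePoint (c + s) (σ + s) + v • cuspNormal (σ + s))
      (cuspConePoint (c + s) (σ + s))
  have hγ : Continuous γ := by
    refine continuous_pi fun i => ?_
    rcases i with i | i <;> fin_cases i <;> simp [γ, cuspConePoint, cuspNormal] <;> fun_prop
  refine (isClosed_zclosure _).mem_of_tendsto (f := γ) (b := 𝓝[≠] 0) ?_ ?_
  · simpa [γ] using (hγ.tendsto 0).mono_left nhdsWithin_le_nhds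
  · filter_upwards [eventually_add_ne_zero c, eventually_add_ne_zero σ] with s hc hσ
    have := sumElim_mem_EDcorr 𝒞 (cuspConePoint_mem_RegL hc hσ)
      (v / (2 * (c + s) ^ 2 * (σ + s) ^ 3))
    rwa [grad_cusp_cuspConePoint, smul_smul, div_mul_cancel₀ _ (by simp [hc, hσ])] at this

theorem cuspConePoint_add_smul_cuspNormal_mem_DS {c σ : ℂ} (h : c * σ = 0) (v : ℂ) :
    cuspConePoint c σ + v • cuspNormal σ ∈ DS 𝒞 := by
  refine ⟨_, sumElim_cuspConePoint_mem_EDcorr c σ v, mem_SingL_cusp_iff.mpr ?_⟩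
  rcases mul_eq_zero.mp h with rfl | rfl <;> simp [cuspConePoint]

theorem setOf_apply_zero_eq_zero_subset_DS_cusp : {u : Fin 3 → ℂ | u 0 = 0} ⊆ DS 𝒞 := by
  rintro u (hu : u 0 = 0)
  convert cuspConePoint_add_smul_cuspNormal_mem_DS (mul_zero (u 2)) (u 1)
  ext i
  fin_cases i <;> simp [cuspConePoint, cuspNormal, hu]

theorem dualHypersurface_subset_DS_cusp :
    {u : Fin 3 → ℂ | 4 * u 0 ^ 3 - 27 * u 1 ^ 2 * u 2 = 0} ⊆ DS 𝒞 := by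
  rintro u (hu : 4 * u 0 ^ 3 - 27 * u 1 ^ 2 * u 2 = 0)
  rcases eq_or_ne (u 1) 0 with h1 | h1
  · apply setOf_apply_zero_eq_zero_subset_DS_cusp
    have : u 0 ^ 3 = 0 := by linear_combination hu / 4 + 27 / 4 * u 1 * u 2 * h1
    exact pow_eq_zero_iff three_ne_zero |>.mp this
  · convert cuspConePoint_add_smul_cuspNormal_mem_DS (zero_mul (2 * u 0 / (3 * u 1))) (u 1)
    ext i
    fin_cases i <;> simp [cuspConePoint, cuspNormal]
    · field_simp
    · field_simp
      linear_combination -hu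

theorem DS_cusp : DS 𝒞 = {u | u 0 * (4 * u 0 ^ 3 - 27 * u 1 ^ 2 * u 2) = 0} := by
  refine DS_cusp_subset.antisymm fun u hu => ?_
  rcases mul_eq_zero.mp hu with h | h
  · exact setOf_apply_zero_eq_zero_subset_DS_cusp h
  · exact dualHypersurface_subset_DS_cusp h

noncomputable def cuspDualParam : Fin 3 → MvPolynomial (Fin 3) ℂ :=
  ![3 * X 0 * X 1 ^ 2 * X 2, 2 * X 0 * X 1 ^ 3, X 0 * X 2 ^ 3]

theorem range_eval_cuspDualParam :
    Set.range (fun v i => eval v (cuspDualParam i)) =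
      {u : Fin 3 → ℂ | 4 * u 0 ^ 3 - 27 * u 1 ^ 2 * u 2 = 0} := by
  refine Set.Subset.antisymm ?_ fun u (hu : 4 * u 0 ^ 3 - 27 * u 1 ^ 2 * u 2 = 0) => ?_
  · rintro _ ⟨v, rfl⟩
    simp [cuspDualParam]
    ring
  rcases eq_or_ne (u 0) 0 with h0 | h0
  · have : u 1 ^ 2 * u 2 = 0 := by linear_combination -hu / 27 + 4 / 27 * u 0 ^ 2 * h0
    rcases mul_eq_zero.mp this with h1 | h2
    · refine ⟨![u 2, 0, 1], ?_⟩
      ext i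
      fin_cases i <;> simp [cuspDualParam, h0, pow_eq_zero_iff two_ne_zero |>.mp h1]
    · refine ⟨![u 1 / 2, 1, 0], ?_⟩
      ext i
      fin_cases i <;> simp [cuspDualParam, h0, h2, mul_div_cancel₀]
  · refine ⟨![u 2, 3 * u 1 / (2 * u 0), 1], ?_⟩
    ext i
    fin_cases i <;> simp [cuspDualParam] <;> field_simp
    · linear_combination -hu
    · linear_combination -u 1 * hu

end CuspidalCubic

/-- The ED data singular locus of the cuspidal cubic cone `V(x₁³ + x₂²x₃)` is the hypersurface
`V(x₁(4x₁³ - 27x₂²x₃))`; in particular the dual variety `V(4x₁³ - 27x₂²x₃)` is an irreducible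
component of it. -/
theorem DS_cuspidal_cubic :
    DS (X 0 ^ 3 + X 1 ^ 2 * X 2 : MvPolynomial (Fin 3) ℂ) =
      {u : Fin 3 → ℂ | u 0 * (4 * u 0 ^ 3 - 27 * u 1 ^ 2 * u 2) = 0} ∧
    IsIrredComponentOf {u : Fin 3 → ℂ | 4 * u 0 ^ 3 - 27 * u 1 ^ 2 * u 2 = 0}
      (DS (X 0 ^ 3 + X 1 ^ 2 * X 2 : MvPolynomial (Fin 3) ℂ)) := by
  have hPlane : IsZClosed {u : Fin 3 → ℂ | u 0 = 0} := by
    simpa using isZClosed_setOf_eval_eq_zero (X 0 : MvPolynomial (Fin 3) ℂ)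
  have hDual : IsZClosed {u : Fin 3 → ℂ | 4 * u 0 ^ 3 - 27 * u 1 ^ 2 * u 2 = 0} := by
    convert isZClosed_setOf_eval_eq_zero
      (4 * X 0 ^ 3 - 27 * X 1 ^ 2 * X 2 : MvPolynomial (Fin 3) ℂ) using 4
    simp
  refine ⟨DS_cusp, dualHypersurface_subset_DS_cusp, hDual,
    range_eval_cuspDualParam ▸ isZIrreducible_range_eval _, fun C _ hC hDualC hCDS => ?_⟩
  rw [DS_cusp] at hCDS
  rcases hC.2 _ _ hPlane hDual fun u hu => mul_eq_zero.mp (hCDS hu) with h | h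
  · have : (![3, 2, 1] : Fin 3 → ℂ) ∈ C := hDualC (by simp; norm_num)
    exact absurd (h this) (by norm_num)
  · exact h.antisymm hDualC
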